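/- arXiv:1901.09576 — 2 statements merged into one kernel-verified Lean document; each statement's English description precedes it below -/
import Mathlib

section
/- Let ℬ be a Banach space and f : [0,∞) → ℬ a C² function such that there exist a ≥ 0 and M > 0 with ‖f(t)‖ ≤ M e^{at}, ‖f′(t)‖ ≤ M e^{at}, ‖f″(t)‖ ≤ M e^{at} for all t ≥ 0. Then for every x > a, ∫₀^∞ e^{−tx} (sin(Rt)/t) f(t) dt → (π/2) f(0) as R → +∞. -/
/-!
Split `f t = f 0 + t • slope f 0 t`. The first part contributes
`(∫₀^∞ e^{-tx} sin (R t) / t dt) • f 0 = arctan (R / x) • f 0`; the arctan is found by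
differentiating in `R`, which leaves the Laplace transform `x / (x² + R²)` of `cos (R t)`.
The second part is `∫₀^∞ sin (R t) • φ t dt` with `φ t = e^{-tx} • slope f 0 t`, which is
integrable since the mean value theorem bounds the slope by `M e^{at}`. It tends to `0` by a
Riemann–Lebesgue argument: near `0` the integral is small uniformly in `R`, and on `(δ, ∞)`
integration by parts against `-cos (R t) / R` gives a bound `O(1 / R)`.
-/

open MeasureTheory Real Set Filter Topology

lemma integrableOn_Ioi_of_norm_le_mul_exp_neg {E : Type*} [NormedAddCommGroup E] {u : ℝ → E}
    {δ b C : ℝ} (hb : 0 < b) (hu : ContinuousOn u (Ioi δ))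
    (hbound : ∀ t ∈ Ioi δ, ‖u t‖ ≤ C * exp (-t * b)) : IntegrableOn u (Ioi δ) := by
  refine ((exp_neg_integrableOn_Ioi δ hb).const_mul C).mono'
    (hu.aestronglyMeasurable measurableSet_Ioi) ((ae_restrict_iff' measurableSet_Ioi).2 ?_)
  exact .of_forall fun t ht => by simpa only [neg_mul_comm, mul_comm b] using hbound t ht

section LaplaceSinc
variable {x : ℝ}

lemma integrableOn_exp_neg_mul_sin_div (hx : 0 < x) (R : ℝ) :
    IntegrableOn (fun t => exp (-t * x) * (sin (R * t) / t)) (Ioi 0) := by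
  refine integrableOn_Ioi_of_norm_le_mul_exp_neg (C := |R|) hx ?_ fun t (ht : 0 < t) => ?_
  · exact ContinuousOn.mul (by fun_prop) ((by fun_prop : Continuous _).continuousOn.div
      continuousOn_id fun t ht => ne_of_gt ht)
  · rw [norm_mul, norm_div, Real.norm_eq_abs, Real.norm_eq_abs, Real.norm_eq_abs, Real.abs_exp,
      abs_of_pos ht, mul_comm]
    gcongr
    exact (div_le_iff₀ ht).2 (abs_sin_le_abs.trans_eq (by rw [abs_mul, abs_of_pos ht]))

lemma integrableOn_exp_neg_mul_cos (hx : 0 < x) (R : ℝ) :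
    IntegrableOn (fun t => exp (-t * x) * cos (R * t)) (Ioi 0) :=
  integrableOn_Ioi_of_norm_le_mul_exp_neg (C := 1) hx (by fun_prop) fun t _ => by
    rw [norm_mul, Real.norm_eq_abs, Real.abs_exp, mul_comm]
    gcongr
    exact abs_cos_le_one _

lemma integral_exp_neg_mul_cos (hx : 0 < x) (R : ℝ) :
    ∫ t in Ioi 0, exp (-t * x) * cos (R * t) = x / (x ^ 2 + R ^ 2) := by
  have hre : (-x + R * Complex.I).re < 0 := by simpa using hx
  have h := integral_re (integrableOn_exp_mul_complex_Ioi hre 0)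
  rw [integral_exp_mul_complex_Ioi hre 0] at h
  convert h using 1
  · refine setIntegral_congr_fun measurableSet_Ioi fun t _ => ?_
    simp [Complex.exp_re, mul_comm]
  · simp [Complex.div_re, Complex.normSq_apply, sq]

lemma hasDerivAt_integral_exp_neg_mul_sin_div (hx : 0 < x) (R : ℝ) :
    HasDerivAt (fun r => ∫ t in Ioi 0, exp (-t * x) * (sin (r * t) / t))
      (x / (x ^ 2 + R ^ 2)) R := by
  rw [← integral_exp_neg_mul_cos hx]
  refine (hasDerivAt_integral_of_dominated_loc_of_deriv_le (bound := fun t => exp (-t * x))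
    (F' := fun r t => exp (-t * x) * cos (r * t))
    univ_mem (.of_forall fun r => (integrableOn_exp_neg_mul_sin_div hx r).aestronglyMeasurable)
    (integrableOn_exp_neg_mul_sin_div hx R)
    (integrableOn_exp_neg_mul_cos hx R).aestronglyMeasurable
    (.of_forall fun t r _ => ?_) ?_
    ((ae_restrict_iff' measurableSet_Ioi).2 (.of_forall fun t ht r _ => ?_))).2
  · rw [norm_mul, Real.norm_eq_abs, Real.abs_exp]
    exact mul_le_of_le_one_right (exp_pos _).le (abs_cos_le_one _)
  · exact integrableOn_Ioi_of_norm_le_mul_exp_neg (C := 1) hx (by fun_prop) fun t _ => by simp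
  · have h := ((hasDerivAt_mul_const (x := r) t).sin).const_mul (exp (-t * x) / t)
    have ht : t ≠ 0 := ne_of_gt ht
    refine (h.congr_deriv (by field_simp)).congr_of_eventuallyEq (.of_forall fun r => ?_)
    ring

lemma integral_exp_neg_mul_sin_div (hx : 0 < x) (R : ℝ) :
    ∫ t in Ioi 0, exp (-t * x) * (sin (R * t) / t) = arctan (R / x) := by
  have harctan (r : ℝ) : HasDerivAt (fun r => arctan (r / x)) (x / (x ^ 2 + r ^ 2)) r := by
    refine ((hasDerivAt_arctan (r / x)).comp r ((hasDerivAt_id r).div_const x)).congr_deriv ?_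
    field_simp
  have hderiv (r : ℝ) : HasDerivAt
      (fun r => (∫ t in Ioi 0, exp (-t * x) * (sin (r * t) / t)) - arctan (r / x)) 0 r := by
    have h := (hasDerivAt_integral_exp_neg_mul_sin_div hx r).sub (harctan r)
    rwa [sub_self] at h
  have hconst := is_const_of_deriv_eq_zero (fun r => (hderiv r).differentiableAt)
    (fun r => (hderiv r).deriv) R 0
  simpa [sub_eq_zero] using hconst

lemma tendsto_integral_exp_neg_mul_sin_div (hx : 0 < x) :
    Tendsto (fun R => ∫ t in Ioi 0, exp (-t * x) * (sin (R * t) / t)) atTop (𝓝 (π / 2)) := by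
  simp_rw [integral_exp_neg_mul_sin_div hx]
  exact (tendsto_nhds_of_tendsto_nhdsWithin tendsto_arctan_atTop).comp
    (tendsto_id.atTop_div_const hx)

end LaplaceSinc

section
variable {E : Type*} [NormedAddCommGroup E] [NormedSpace ℝ E]

lemma HasDerivAt.slope {f : ℝ → E} {f' : E} {a t : ℝ} (hf : HasDerivAt f f' t) (ht : t ≠ a) :
    HasDerivAt (slope f a) ((t - a)⁻¹ • (f' - slope f a t)) t := by
  have hta : t - a ≠ 0 := sub_ne_zero.2 ht
  rw [slope_fun_def]
  refine (((hasDerivAt_id t).sub_const a).inv hta |>.smul (hf.sub_const (f a))).congr_deriv ?_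
  simp only [vsub_eq_sub, id, Pi.inv_apply]
  match_scalars <;> field_simp

lemma ContinuousOn.slope {f : ℝ → E} {s : Set ℝ} {a : ℝ} (hf : ContinuousOn f s) (ha : a ∉ s) :
    ContinuousOn (slope f a) s := by
  simp only [slope_fun_def, vsub_eq_sub]
  refine ((continuousOn_id.sub continuousOn_const).inv₀ fun t ht => ?_).smul
    (hf.sub continuousOn_const)
  exact sub_ne_zero.2 (ne_of_mem_of_not_mem ht ha)

lemma tendsto_setIntegral_Ioc_nhdsGT {g : ℝ → E} {a : ℝ} (hg : IntegrableOn g (Ioi a)) :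
    Tendsto (fun δ => ∫ t in Ioc a δ, g t) (𝓝[>] a) (𝓝 0) := by
  have hvol : Tendsto (fun δ => volume (Ioc a δ)) (𝓝[>] a) (𝓝 0) := by
    simp_rw [Real.volume_Ioc]
    simpa using ENNReal.tendsto_ofReal
      ((continuous_id.sub continuous_const).tendsto' a 0 (sub_self a) |>.mono_left
        nhdsWithin_le_nhds)
  refine (hg.tendsto_setIntegral_nhds_zero (s := fun δ => Ioc a δ)
    (tendsto_of_tendsto_of_tendsto_of_le_of_le tendsto_const_nhds hvol (fun _ => zero_le)
      fun δ => Measure.restrict_apply_le _ _)).congr fun δ => ?_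
  rw [Measure.restrict_restrict measurableSet_Ioc, inter_eq_left.2 Ioc_subset_Ioi_self]

section SinSmul
variable {φ φ' : ℝ → E}

lemma integrableOn_sin_mul_smul {s : Set ℝ} (hφ : IntegrableOn φ s) (R : ℝ) :
    IntegrableOn (fun t => sin (R * t) • φ t) s :=
  hφ.bdd_smul 1 (by fun_prop : Continuous fun t => sin (R * t)).aestronglyMeasurable
    (.of_forall fun t => abs_sin_le_one _)

variable [CompleteSpace E]

lemma norm_integral_Ioi_sin_mul_smul_le {δ R : ℝ} (hR : 0 < R)
    (hderiv : ∀ t ∈ Ici δ, HasDerivAt φ (φ' t) t)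
    (hφ : IntegrableOn φ (Ioi δ)) (hφ' : IntegrableOn φ' (Ioi δ)) :
    ‖∫ t in Ioi δ, sin (R * t) • φ t‖ ≤ (‖φ δ‖ + ∫ t in Ioi δ, ‖φ' t‖) / R := by
  have hcos (t : ℝ) (v : E) : ‖(-cos (R * t) / R) • v‖ ≤ ‖v‖ / R := by
    rw [norm_smul, norm_div, norm_neg, Real.norm_of_nonneg hR.le, div_mul_eq_mul_div]
    gcongr
    exact mul_le_of_le_one_left (norm_nonneg v) (abs_cos_le_one _)
  set H : ℝ → E := fun t => (-cos (R * t) / R) • φ t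
  have hH (t : ℝ) (ht : t ∈ Ici δ) :
      HasDerivAt H ((-cos (R * t) / R) • φ' t + sin (R * t) • φ t) t := by
    have hc : HasDerivAt (fun t => -cos (R * t) / R) (sin (R * t)) t := by
      refine (((hasDerivAt_id t).const_mul R).cos.neg.div_const R).congr_deriv ?_
      field_simp
      simp
    exact hc.smul (hderiv t ht)
  have hsin := integrableOn_sin_mul_smul hφ R
  have hcos' : IntegrableOn (fun t => (-cos (R * t) / R) • φ' t) (Ioi δ) :=
    (hφ'.norm.div_const R).mono' ((by fun_prop : Continuous fun t => -cos (R * t) / R)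
      |>.aestronglyMeasurable.smul hφ'.aestronglyMeasurable) (.of_forall fun t => hcos t (φ' t))
  have hHtop : Tendsto H atTop (𝓝 0) := by
    have hφtop := tendsto_zero_of_hasDerivAt_of_integrableOn_Ioi
      (fun t ht => hderiv t (Ioi_subset_Ici_self ht)) hφ' hφ
    refine squeeze_zero_norm (fun t => hcos t (φ t)) ?_
    simpa using (tendsto_norm_zero.comp hφtop).div_const R
  have hFTC := integral_Ioi_of_hasDerivAt_of_tendsto' hH (hcos'.add hsin) hHtop
  rw [integral_add hcos' hsin, zero_sub, ← eq_sub_iff_add_eq'] at hFTC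
  rw [hFTC, add_div]
  refine (norm_sub_le _ _).trans (add_le_add ((norm_neg _).trans_le (hcos δ (φ δ))) ?_)
  rw [← integral_div]
  exact norm_integral_le_of_norm_le (hφ'.norm.div_const R) (.of_forall fun t => hcos t (φ' t))

lemma tendsto_integral_Ioi_sin_mul_smul {a : ℝ} (hderiv : ∀ t ∈ Ioi a, HasDerivAt φ (φ' t) t)
    (hφ : IntegrableOn φ (Ioi a)) (hφ' : ∀ δ ∈ Ioi a, IntegrableOn φ' (Ioi δ)) :
    Tendsto (fun R => ∫ t in Ioi a, sin (R * t) • φ t) atTop (𝓝 0) := by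
  rw [Metric.tendsto_nhds]
  intro ε hε
  have hnear := tendsto_setIntegral_Ioc_nhdsGT hφ.norm
  obtain ⟨δ, hδ, hδa⟩ :=
    ((hnear.eventually (gt_mem_nhds (half_pos hε))).and self_mem_nhdsWithin).exists
  have hfar : Tendsto (fun R => (‖φ δ‖ + ∫ t in Ioi δ, ‖φ' t‖) / R) atTop (𝓝 0) :=
    tendsto_const_nhds.div_atTop tendsto_id
  filter_upwards [hfar.eventually (gt_mem_nhds (half_pos hε)), eventually_gt_atTop 0]
    with R hR hR0
  have hsin := integrableOn_sin_mul_smul hφ R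
  rw [dist_zero_right, ← Ioc_union_Ioi_eq_Ioi (le_of_lt hδa), setIntegral_union
    (Ioc_disjoint_Ioi le_rfl) measurableSet_Ioi (hsin.mono_set Ioc_subset_Ioi_self)
    (hsin.mono_set (Ioi_subset_Ioi (le_of_lt hδa)))]
  calc _ ≤ ‖∫ t in Ioc a δ, sin (R * t) • φ t‖ + ‖∫ t in Ioi δ, sin (R * t) • φ t‖ :=
        norm_add_le _ _
    _ < ε / 2 + ε / 2 := by
        refine add_lt_add_of_le_of_lt (le_trans ?_ hδ.le) (lt_of_le_of_lt ?_ hR)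
        · refine norm_integral_le_of_norm_le (hφ.mono_set Ioc_subset_Ioi_self).norm
            (.of_forall fun t => ?_)
          rw [norm_smul]
          exact mul_le_of_le_one_left (norm_nonneg _) (abs_sin_le_one _)
        · exact norm_integral_Ioi_sin_mul_smul_le hR0 (fun t ht => hderiv t (hδa.trans_le ht))
            (hφ.mono_set (Ioi_subset_Ioi hδa.le)) (hφ' δ hδa)
    _ = ε := add_halves ε

end SinSmul

section Slope
variable {f : ℝ → E} {a M x : ℝ}

lemma exp_neg_mul_mul_mul_exp (t C : ℝ) :
    exp (-t * x) * (C * exp (a * t)) = C * exp (-t * (x - a)) := by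
  rw [mul_left_comm, ← exp_add]
  ring_nf

lemma norm_slope_le_mul_exp (ha : 0 ≤ a) (hM : 0 ≤ M) (hf : DifferentiableOn ℝ f (Ici 0))
    (h1 : ∀ t : ℝ, 0 ≤ t → ‖derivWithin f (Ici 0) t‖ ≤ M * exp (a * t)) {t : ℝ} (ht : 0 < t) :
    ‖slope f 0 t‖ ≤ M * exp (a * t) := by
  have hmvt := norm_image_sub_le_of_norm_deriv_le_segment' (f' := derivWithin f (Ici 0))
    (C := M * exp (a * t)) (fun u hu => (hf u hu.1).hasDerivWithinAt.mono Icc_subset_Ici_self)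
    (fun u hu => (h1 u hu.1).trans (by gcongr; exact hu.2.le)) t (right_mem_Icc.2 ht.le)
  rw [sub_zero] at hmvt
  rw [slope_def_module, norm_smul, sub_zero, norm_inv, Real.norm_of_nonneg ht.le,
    inv_mul_le_iff₀ ht, mul_comm t]
  exact hmvt

lemma integrableOn_exp_neg_mul_smul_slope (ha : 0 ≤ a) (hM : 0 ≤ M)
    (hf : DifferentiableOn ℝ f (Ici 0))
    (h1 : ∀ t : ℝ, 0 ≤ t → ‖derivWithin f (Ici 0) t‖ ≤ M * exp (a * t)) (hx : a < x) :
    IntegrableOn (fun t => exp (-t * x) • slope f 0 t) (Ioi 0) := by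
  have hslope_cont := (hf.continuousOn.mono Ioi_subset_Ici_self).slope self_notMem_Ioi
  refine integrableOn_Ioi_of_norm_le_mul_exp_neg (C := M) (sub_pos.2 hx)
    ((Continuous.continuousOn (by fun_prop)).smul hslope_cont) fun t (ht : 0 < t) => ?_
  rw [norm_smul, Real.norm_of_nonneg (exp_pos _).le, ← exp_neg_mul_mul_mul_exp]
  gcongr
  exact norm_slope_le_mul_exp ha hM hf h1 ht

lemma hasDerivAt_exp_neg_mul_smul_slope {f' : E} {t : ℝ} (hf : HasDerivAt f f' t) (ht : t ≠ 0) :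
    HasDerivAt (fun t => exp (-t * x) • slope f 0 t)
      (exp (-t * x) • (t⁻¹ • (f' - slope f 0 t) - x • slope f 0 t)) t := by
  have he : HasDerivAt (fun t => exp (-t * x)) (-x * exp (-t * x)) t := by
    simpa [mul_comm] using ((hasDerivAt_neg t).mul_const x).exp
  refine (he.smul (hf.slope ht)).congr_deriv ?_
  rw [sub_zero]
  module

lemma integrableOn_deriv_exp_neg_mul_smul_slope (ha : 0 ≤ a) (hM : 0 ≤ M)
    (hf : ContDiffOn ℝ 1 f (Ici 0))
    (h1 : ∀ t : ℝ, 0 ≤ t → ‖derivWithin f (Ici 0) t‖ ≤ M * exp (a * t)) (hx : a < x)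
    {δ : ℝ} (hδ : 0 < δ) :
    IntegrableOn (fun t => exp (-t * x) •
      (t⁻¹ • (derivWithin f (Ici 0) t - slope f 0 t) - x • slope f 0 t)) (Ioi δ) := by
  set f' := derivWithin f (Ici 0)
  have hslope_cont := (hf.continuousOn.mono Ioi_subset_Ici_self).slope self_notMem_Ioi
  have hf'_cont : ContinuousOn f' (Ioi 0) :=
    (hf.continuousOn_derivWithin (uniqueDiffOn_Ici 0) le_rfl).mono Ioi_subset_Ici_self
  have hcont : ContinuousOn (fun t => exp (-t * x) •
      (t⁻¹ • (f' t - slope f 0 t) - x • slope f 0 t)) (Ioi 0) :=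
    (Continuous.continuousOn (by fun_prop)).smul
      (((continuousOn_inv₀.mono fun t ht => ne_of_gt ht).smul (hf'_cont.sub hslope_cont)).sub
        (continuousOn_const.smul hslope_cont))
  refine integrableOn_Ioi_of_norm_le_mul_exp_neg (C := M * (2 * δ⁻¹ + x)) (sub_pos.2 hx)
    (hcont.mono (Ioi_subset_Ioi hδ.le)) fun t (ht : δ < t) => ?_
  have ht0 : 0 < t := hδ.trans ht
  have hx0 : 0 ≤ x := ha.trans hx.le
  calc _ ≤ exp (-t * x) * (t⁻¹ * (‖f' t‖ + ‖slope f 0 t‖) + x * ‖slope f 0 t‖) := by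
        rw [norm_smul, Real.norm_of_nonneg (exp_pos _).le]
        gcongr
        refine (norm_sub_le _ _).trans (add_le_add ?_ ?_)
        · rw [norm_smul, norm_inv, Real.norm_of_nonneg ht0.le]
          gcongr
          exact norm_sub_le (f' t) (slope f 0 t)
        · rw [norm_smul, Real.norm_of_nonneg hx0]
    _ ≤ exp (-t * x) * (δ⁻¹ * (M * exp (a * t) + M * exp (a * t)) + x * (M * exp (a * t))) := by
        have hinv : t⁻¹ ≤ δ⁻¹ := inv_anti₀ hδ ht.le
        have hf't := h1 t ht0.le
        have hslope_t := norm_slope_le_mul_exp ha hM (hf.differentiableOn one_ne_zero) h1 ht0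
        gcongr
    _ = M * (2 * δ⁻¹ + x) * exp (-t * (x - a)) := by
        rw [← exp_neg_mul_mul_mul_exp]
        ring

lemma tendsto_integral_sin_mul_smul_exp_neg_mul_smul_slope [CompleteSpace E] (ha : 0 ≤ a)
    (hM : 0 ≤ M) (hf : ContDiffOn ℝ 1 f (Ici 0))
    (h1 : ∀ t : ℝ, 0 ≤ t → ‖derivWithin f (Ici 0) t‖ ≤ M * exp (a * t)) (hx : a < x) :
    Tendsto (fun R => ∫ t in Ioi 0, sin (R * t) • (exp (-t * x) • slope f 0 t)) atTop (𝓝 0) :=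
  tendsto_integral_Ioi_sin_mul_smul
    (fun t (ht : 0 < t) => hasDerivAt_exp_neg_mul_smul_slope
      ((hf.differentiableOn one_ne_zero t ht.le).hasDerivWithinAt.hasDerivAt (Ici_mem_nhds ht))
      ht.ne')
    (integrableOn_exp_neg_mul_smul_slope ha hM (hf.differentiableOn one_ne_zero) h1 hx)
    fun _ hδ => integrableOn_deriv_exp_neg_mul_smul_slope ha hM hf h1 hx hδ

lemma integral_exp_neg_mul_sin_div_smul_eq_add [CompleteSpace E] (hx : 0 < x)
    (hslope : IntegrableOn (fun t => exp (-t * x) • slope f 0 t) (Ioi 0)) (R : ℝ) :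
    ∫ t in Ioi 0, (exp (-t * x) * (sin (R * t) / t)) • f t =
      (∫ t in Ioi 0, exp (-t * x) * (sin (R * t) / t)) • f 0 +
        ∫ t in Ioi 0, sin (R * t) • (exp (-t * x) • slope f 0 t) := by
  rw [← integral_smul_const, ← integral_add
    ((integrableOn_exp_neg_mul_sin_div hx R).smul_const (f 0)) (integrableOn_sin_mul_smul hslope R)]
  refine setIntegral_congr_fun measurableSet_Ioi fun t (ht : 0 < t) => ?_
  simp only [slope_def_module, sub_zero, smul_smul, smul_sub]
  field_simp
  module

end Slope

end

theorem tendsto_integral_sinc_smul_general {B : Type*} [NormedAddCommGroup B] [NormedSpace ℝ B]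
    [CompleteSpace B] (f : ℝ → B) (a M : ℝ) (ha : 0 ≤ a) (hM : 0 < M)
    (hf : ContDiffOn ℝ 2 f (Set.Ici 0))
    (h1 : ∀ t : ℝ, 0 ≤ t → ‖derivWithin f (Set.Ici 0) t‖ ≤ M * Real.exp (a * t))
    (x : ℝ) (hx : a < x) :
    Filter.Tendsto
      (fun R : ℝ =>
        ∫ t in Set.Ioi (0 : ℝ), (Real.exp (-t * x) * (Real.sin (R * t) / t)) • f t)
      Filter.atTop (nhds ((Real.pi / 2) • f 0)) := by
  have hx0 : 0 < x := ha.trans_lt hx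
  have hf1 : ContDiffOn ℝ 1 f (Ici 0) := hf.of_le one_le_two
  have hslope := integrableOn_exp_neg_mul_smul_slope ha hM.le (hf1.differentiableOn one_ne_zero)
    h1 hx
  simp_rw [integral_exp_neg_mul_sin_div_smul_eq_add hx0 hslope]
  simpa using ((tendsto_integral_exp_neg_mul_sin_div hx0).smul_const (f 0)).add
    (tendsto_integral_sin_mul_smul_exp_neg_mul_smul_slope ha hM.le hf1 h1 hx)

/-- If `f : [0,∞) → ℬ` is `C²` with `‖f(t)‖, ‖f'(t)‖, ‖f''(t)‖ ≤ M e^(a t)`,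
then for every `x > a`, `∫₀^∞ e^(-t x) (sin (R t)/t) f(t) dt → (π/2) f(0)` as `R → ∞`. -/
theorem tendsto_integral_sinc_smul {B : Type*} [NormedAddCommGroup B] [NormedSpace ℝ B]
    [CompleteSpace B] (f : ℝ → B) (a M : ℝ) (ha : 0 ≤ a) (hM : 0 < M)
    (hf : ContDiffOn ℝ 2 f (Set.Ici 0))
    (h0 : ∀ t : ℝ, 0 ≤ t → ‖f t‖ ≤ M * Real.exp (a * t))
    (h1 : ∀ t : ℝ, 0 ≤ t → ‖derivWithin f (Set.Ici 0) t‖ ≤ M * Real.exp (a * t))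
    (h2 : ∀ t : ℝ, 0 ≤ t →
      ‖derivWithin (derivWithin f (Set.Ici 0)) (Set.Ici 0) t‖ ≤ M * Real.exp (a * t))
    (x : ℝ) (hx : a < x) :
    Filter.Tendsto
      (fun R : ℝ =>
        ∫ t in Set.Ioi (0 : ℝ), (Real.exp (-t * x) * (Real.sin (R * t) / t)) • f t)
      Filter.atTop (nhds ((Real.pi / 2) • f 0)) :=
  tendsto_integral_sinc_smul_general f a M ha hM hf h1 x hx
end

section
/- Let Q be an entire function of order strictly less than 1/2 which is bounded on the positive real half-line [0,∞). Then Q is constant. -/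
/-!
The map `w ↦ w ^ 4` sends the closed first quadrant onto `ℂ` and both of its boundary rays into
`[0, ∞)`. So if `f` has order `c < 1/2` and is bounded on `[0, ∞)`, then `w ↦ f (w ^ 4)` has order
`4 c < 2` and is bounded on the boundary of the quadrant; the Phragmén–Lindelöf principle for a
quadrant bounds it inside, hence `f` is bounded on `ℂ`, and Liouville's theorem applies.
-/

open Complex Asymptotics Bornology

namespace Complex

theorem exists_mul_I_pow_mem_quadrant (u : ℂ) :
    ∃ k : ℕ, 0 ≤ (u * I ^ k).re ∧ 0 ≤ (u * I ^ k).im := by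
  rcases le_or_gt 0 u.re with hre | hre <;> rcases le_or_gt 0 u.im with him | him
  · exact ⟨0, by simpa using ⟨hre, him⟩⟩
  · exact ⟨1, by simpa using ⟨him.le, hre⟩⟩
  · exact ⟨3, by simpa [pow_succ] using ⟨him, hre.le⟩⟩
  · exact ⟨2, by simpa [pow_succ] using ⟨hre.le, him.le⟩⟩

theorem exists_nonneg_re_im_pow_four_eq (z : ℂ) :
    ∃ w : ℂ, 0 ≤ w.re ∧ 0 ≤ w.im ∧ w ^ 4 = z := by
  obtain ⟨u, rfl⟩ := IsAlgClosed.exists_pow_nat_eq z (n := 4) (by norm_num)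
  obtain ⟨k, hre, him⟩ := exists_mul_I_pow_mem_quadrant u
  refine ⟨u * I ^ k, hre, him, ?_⟩
  rw [mul_pow, ← pow_mul, mul_comm k, pow_mul, I_pow_four, one_pow, mul_one]

end Complex

namespace PhragmenLindelof

variable {E : Type*} [NormedAddCommGroup E] [NormedSpace ℂ E] {f : ℂ → E} {C : ℝ}

theorem norm_le_of_norm_le_on_nonneg_real (hf : Differentiable ℂ f)
    (hgrowth : ∃ c < (1 / 2 : ℝ), ∃ B, f =O[cobounded ℂ] fun z ↦ Real.exp (B * ‖z‖ ^ c))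
    (hre : ∀ x : ℝ, 0 ≤ x → ‖f x‖ ≤ C) (z : ℂ) : ‖f z‖ ≤ C := by
  obtain ⟨w, hw_re, hw_im, rfl⟩ := exists_nonneg_re_im_pow_four_eq z
  have hpow_nonneg : ∀ x : ℝ, 0 ≤ x → ‖f ((x : ℂ) ^ 4)‖ ≤ C := fun x hx ↦ by
    rw [← ofReal_pow]
    exact hre _ (by positivity)
  refine quadrant_I (f := fun w ↦ f (w ^ 4)) (hf.comp (differentiable_pow 4)).diffContOnCl ?_
    hpow_nonneg (fun x hx ↦ ?_) hw_re hw_im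
  · obtain ⟨c, hc, B, hO⟩ := hgrowth
    refine ⟨4 * c, by linarith, B, ?_⟩
    refine ((hO.comp_tendsto (tendsto_pow_cobounded_cobounded (by norm_num))).mono
      inf_le_left).congr_right fun w ↦ ?_
    simp only [Function.comp_apply, norm_pow]
    rw [← Real.rpow_natCast_mul (norm_nonneg w)]
    norm_num
  · rw [mul_pow, I_pow_four, mul_one]
    exact hpow_nonneg x hx

end PhragmenLindelof

/-- An entire function of order strictly less than `1/2` (i.e. `‖Q z‖ ≤ C exp(‖z‖^ρ)`
for some `ρ < 1/2`) which is bounded on `[0,∞)` is constant (Phragmén–Lindelöf). -/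
theorem entire_order_lt_half_bounded_on_halfline_const (Q : ℂ → ℂ)
    (hQ : Differentiable ℂ Q)
    (horder : ∃ ρ C : ℝ, 0 ≤ ρ ∧ ρ < 1 / 2 ∧ 0 < C ∧
      ∀ z : ℂ, ‖Q z‖ ≤ C * Real.exp (‖z‖ ^ ρ))
    (hbdd : ∃ Bd : ℝ, ∀ x : ℝ, 0 ≤ x → ‖Q (x : ℂ)‖ ≤ Bd) :
    ∀ z w : ℂ, Q z = Q w := by
  obtain ⟨ρ, C, -, hρ, -, hgrowth⟩ := horder
  obtain ⟨Bd, hBd⟩ := hbdd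
  have hO : Q =O[cobounded ℂ] fun z ↦ Real.exp (1 * ‖z‖ ^ ρ) :=
    .of_bound C <| .of_forall fun z ↦ by simpa [abs_of_pos (Real.exp_pos _)] using hgrowth z
  have hQ_le : ∀ z, ‖Q z‖ ≤ Bd :=
    PhragmenLindelof.norm_le_of_norm_le_on_nonneg_real hQ ⟨ρ, hρ, 1, hO⟩ hBd
  exact hQ.apply_eq_apply_of_bounded <| isBounded_iff_forall_norm_le.2 ⟨Bd, by
    rintro _ ⟨z, rfl⟩
    exact hQ_le z⟩
end
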